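/- Let X be a finite alphabet, V a natural number, and a : X ∪ {−} → ℝ^V any map with a(−) = 0, inducing the cost function c_A(x, y) = ‖a(x) − a(y)‖ (Euclidean norm). Then the tree edit distance d_{c_A} is a pseudo-metric on the set of trees over X. -/
import Mathlib


/-- A rooted ordered tree with labels from `X`. -/
inductive PTree (X : Type) : Type where
  | node : X → List (PTree X) → PTree X

namespace PTree

variable {X : Type}

mutual
  /-- The labels of a tree in pre-order. -/
  def preorder : PTree X → List X
    | .node l cs => l :: preorderF cs
  /-- The labels of a forest in pre-order. -/
  def preorderF : List (PTree X) → List X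
    | [] => []
    | t :: ts => preorder t ++ preorderF ts
end

/-- The size of a tree (number of nodes). -/
def size (t : PTree X) : ℕ := (preorder t).length

/-- `Deletes f g l` holds iff the forest `g` is obtained from the forest `f` by
deleting one node labeled `l`, attaching its children in its place. -/
inductive Deletes : List (PTree X) → List (PTree X) → X → Prop where
  | here (l : X) (cs rest : List (PTree X)) :
      Deletes (.node l cs :: rest) (cs ++ rest) l
  | child {cs cs' : List (PTree X)} {l : X} (z : X) (rest : List (PTree X)) :
      Deletes cs cs' l → Deletes (.node z cs :: rest) (.node z cs' :: rest) l
  | skip {rest rest' : List (PTree X)} {l : X} (t : PTree X) :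
      Deletes rest rest' l → Deletes (t :: rest) (t :: rest') l

/-- `Replaces f g l l'` holds iff the forest `g` is obtained from the forest `f` by
changing the label `l` of one node into `l'`. -/
inductive Replaces : List (PTree X) → List (PTree X) → X → X → Prop where
  | here (l l' : X) (cs rest : List (PTree X)) :
      Replaces (.node l cs :: rest) (.node l' cs :: rest) l l'
  | child {cs cs' : List (PTree X)} {l l' : X} (z : X) (rest : List (PTree X)) :
      Replaces cs cs' l l' → Replaces (.node z cs :: rest) (.node z cs' :: rest) l l'
  | skip {rest rest' : List (PTree X)} {l l' : X} (t : PTree X) :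
      Replaces rest rest' l l' → Replaces (t :: rest) (t :: rest') l l'

/-- `EditStep c f g r` holds iff one tree edit (a deletion, an insertion, or a
replacement) of cost `r` under the cost function `c` transforms the forest `f`
into the forest `g`. The gap symbol `−` is represented by `none`:
deleting label `l` costs `c (some l) none`, inserting label `l` costs
`c none (some l)`, and replacing label `l` by `l'` costs `c (some l) (some l')`.
An insertion is exactly the inverse of a deletion (the inserted node may adopt
a consecutive run of existing siblings as children). -/
inductive EditStep (c : Option X → Option X → ℝ) :
    List (PTree X) → List (PTree X) → ℝ → Prop where
  | del {f g : List (PTree X)} {l : X} :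
      Deletes f g l → EditStep c f g (c (some l) none)
  | ins {f g : List (PTree X)} {l : X} :
      Deletes g f l → EditStep c f g (c none (some l))
  | rep {f g : List (PTree X)} {l l' : X} :
      Replaces f g l l' → EditStep c f g (c (some l) (some l'))

/-- `Script c f g r` holds iff some edit script (finite sequence of edits) of
total cost `r` under the cost function `c` transforms the forest `f` into the
forest `g`. -/
inductive Script (c : Option X → Option X → ℝ) :
    List (PTree X) → List (PTree X) → ℝ → Prop where
  | nil (f : List (PTree X)) : Script c f f 0
  | cons {f g h : List (PTree X)} {r s : ℝ} :
      EditStep c f g r → Script c g h s → Script c f h (r + s)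

/-- The tree edit distance `d_c`: the infimum of the costs of all edit scripts
transforming the tree `x` into the tree `y`. -/
noncomputable def editDist (c : Option X → Option X → ℝ) (x y : PTree X) : ℝ :=
  sInf {r : ℝ | Script c [x] [y] r}

end PTree

/-- A pseudo-metric on a type `S`: non-negative, symmetric, zero on the
diagonal, and satisfying the triangle inequality. -/
def IsPseudoMetric {S : Type} (c : S → S → ℝ) : Prop :=
  (∀ a b, 0 ≤ c a b) ∧ (∀ a b, c a b = c b a) ∧ (∀ a, c a a = 0) ∧
    (∀ a b d, c a d ≤ c a b + c b d)

namespace PTree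

variable {X : Type} {c : Option X → Option X → ℝ}

lemma Replaces.symm {f g : List (PTree X)} {l l' : X}
    (h : Replaces f g l l') : Replaces g f l' l := by
  induction h with
  | here l l' cs rest => exact .here l' l cs rest
  | child z rest _ ih => exact .child z rest ih
  | skip t _ ih => exact .skip t ih

lemma EditStep.symm (hc : ∀ u v, c u v = c v u) {f g : List (PTree X)} {r : ℝ}
    (h : EditStep c f g r) : EditStep c g f r := by
  cases h with
  | del hd => rw [hc]; exact .ins hd
  | ins hd => rw [hc]; exact .del hd
  | rep hr => rw [hc]; exact .rep hr.symm

lemma Script.snoc {f g h : List (PTree X)} {r s : ℝ}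
    (hs : Script c f g r) (he : EditStep c g h s) : Script c f h (r + s) := by
  induction hs with
  | nil f => rw [zero_add]; exact (add_zero s) ▸ Script.cons he (.nil h)
  | cons e _ ih => rw [add_assoc]; exact .cons e (ih he)

lemma Script.trans {f g h : List (PTree X)} {r s : ℝ}
    (h1 : Script c f g r) (h2 : Script c g h s) : Script c f h (r + s) := by
  induction h1 with
  | nil f => rw [zero_add]; exact h2
  | cons e _ ih => rw [add_assoc]; exact .cons e (ih h2)

lemma Script.symm (hc : ∀ u v, c u v = c v u) {f g : List (PTree X)} {r : ℝ}
    (h : Script c f g r) : Script c g f r := by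
  induction h with
  | nil f => exact .nil f
  | cons e _ ih => rw [add_comm]; exact ih.snoc (e.symm hc)

lemma Script.nonneg (hc : ∀ u v, 0 ≤ c u v) {f g : List (PTree X)} {r : ℝ}
    (h : Script c f g r) : 0 ≤ r := by
  induction h with
  | nil f => exact le_refl 0
  | cons e _ ih => cases e <;> exact add_nonneg (hc _ _) ih

lemma preorderF_append (f g : List (PTree X)) :
    preorderF (f ++ g) = preorderF f ++ preorderF g := by
  induction f with
  | nil => simp [preorderF]
  | cons t ts ih => simp [preorderF, ih]

lemma exists_script_nil (c : Option X → Option X → ℝ) (f : List (PTree X)) :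
    ∃ r, Script c f [] r := by
  generalize hn : (PTree.preorderF f).length = n
  induction n using Nat.strong_induction_on generalizing f with
  | _ n ih =>
    match f with
    | [] => exact ⟨0, .nil []⟩
    | .node l cs :: rest =>
      have hd : Deletes (.node l cs :: rest) (cs ++ rest) l := .here l cs rest
      have hlen : (preorderF (cs ++ rest)).length < n := by
        subst hn
        simp [preorderF, preorder, preorderF_append]
      obtain ⟨r, hr⟩ := ih _ hlen (cs ++ rest) rfl
      exact ⟨_, .cons (.del hd) hr⟩

lemma exists_script (hc : ∀ u v, c u v = c v u) (f g : List (PTree X)) :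
    ∃ r, Script c f g r := by
  obtain ⟨r1, h1⟩ := exists_script_nil c f
  obtain ⟨r2, h2⟩ := exists_script_nil c g
  exact ⟨r1 + r2, h1.trans (h2.symm hc)⟩

end PTree

/-- Let `X` be a finite alphabet, `V` a natural number, and
`a : X ∪ {−} → ℝ^V` any map with `a(−) = 0`, inducing the cost function
`c_A(x, y) = ‖a(x) − a(y)‖` (Euclidean norm). Then the tree edit distance
`d_{c_A}` is a pseudo-metric on the set of trees over `X`. -/
theorem editDist_embeddingCost_isPseudoMetric (X : Type) [Fintype X] (V : ℕ)
    (a : Option X → EuclideanSpace ℝ (Fin V)) (ha : a none = 0) :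
    IsPseudoMetric
      (fun x y : PTree X =>
        PTree.editDist (fun u v : Option X => ‖a u - a v‖) x y) := by
  classical
  set c : Option X → Option X → ℝ := fun u v => ‖a u - a v‖ with hcdef
  have hc_sym : ∀ u v, c u v = c v u := fun u v => norm_sub_rev _ _
  have hc_nonneg : ∀ u v, 0 ≤ c u v := fun u v => norm_nonneg _
  have hbdd : ∀ x y : PTree X, BddBelow {r : ℝ | PTree.Script c [x] [y] r} := by
    intro x y
    exact ⟨0, fun r hr => hr.nonneg hc_nonneg⟩
  have hne : ∀ x y : PTree X, Set.Nonempty {r : ℝ | PTree.Script c [x] [y] r} := by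
    intro x y
    obtain ⟨r, hr⟩ := PTree.exists_script hc_sym [x] [y]
    exact ⟨r, hr⟩
  refine ⟨?_, ?_, ?_, ?_⟩
  · intro x y
    exact Real.sInf_nonneg (fun r hr => hr.nonneg hc_nonneg)
  · intro x y
    show PTree.editDist c x y = PTree.editDist c y x
    unfold PTree.editDist
    congr 1
    ext r
    exact ⟨fun h => h.symm hc_sym, fun h => h.symm hc_sym⟩
  · intro x
    have h0 : (0 : ℝ) ∈ {r : ℝ | PTree.Script c [x] [x] r} := PTree.Script.nil [x]
    have h1 : PTree.editDist c x x ≤ 0 := csInf_le (hbdd x x) h0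
    have h2 : (0:ℝ) ≤ PTree.editDist c x x :=
      Real.sInf_nonneg (fun r hr => hr.nonneg hc_nonneg)
    exact le_antisymm h1 h2
  · intro x y z
    show PTree.editDist c x z ≤ PTree.editDist c x y + PTree.editDist c y z
    have key : ∀ r ∈ {r : ℝ | PTree.Script c [x] [y] r},
        ∀ s ∈ {r : ℝ | PTree.Script c [y] [z] r},
        PTree.editDist c x z ≤ r + s := by
      intro r hr s hs
      exact csInf_le (hbdd x z) (hr.trans hs)
    have step1 : ∀ r ∈ {r : ℝ | PTree.Script c [x] [y] r},
        PTree.editDist c x z ≤ r + PTree.editDist c y z := by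
      intro r hr
      have h2 : PTree.editDist c x z - r ≤ PTree.editDist c y z := by
        apply le_csInf (hne y z)
        intro s hs
        have := key r hr s hs
        linarith
      linarith
    have hfin : PTree.editDist c x z - PTree.editDist c y z ≤ PTree.editDist c x y := by
      apply le_csInf (hne x y)
      intro r hr
      have := step1 r hr
      linarith
    linarith
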